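/- Randomized Integer-Division hashing modulo 2^L is never pairwise independent: if B is odd, then for any prefix β of length n-2 and distinct symbols a, b, the n-grams w_1 = βaa and w_2 = βbb satisfy P(h(w_1) = h(w_2)) ≥ 2/4^L · 2^L = 1/2^{L-1}; pairwise independence would require collision probability exactly 1/2^L. -/

import Mathlib

/-!
Writing `d = h₁ a - h₁ b`, the hashes of `βaa` and `βbb` differ by `B ^ k * (1 + B) * d`.
As `1 + B` is even, this vanishes as soon as `d ∈ {0, 2 ^ (L - 1)}`. The difference of two
independent values one of which is uniform is again uniform, so that event has probability
`2 / 2 ^ L`.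
-/

open MeasureTheory ProbabilityTheory

section UniformDifference

variable {Ω G : Type*} [MeasurableSpace Ω] {μ : Measure Ω} [IsProbabilityMeasure μ]
  [AddGroup G] [Fintype G] [MeasurableSpace G] [MeasurableSingletonClass G]
  {X Y : Ω → G}

theorem ProbabilityTheory.IndepFun.measure_sub_preimage_singleton (hX : Measurable X)
    (hY : Measurable Y) (hXY : IndepFun X Y μ)
    (hY_unif : ∀ r, μ (Y ⁻¹' {r}) = (Fintype.card G : ENNReal)⁻¹) (c : G) :
    μ ((X - Y) ⁻¹' {c}) = (Fintype.card G : ENNReal)⁻¹ := by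
  have hfibers : (X - Y) ⁻¹' {c} = ⋃ r ∈ Finset.univ, X ⁻¹' {r} ∩ Y ⁻¹' {-c + r} := by
    ext ω
    simp only [Set.mem_preimage, Set.mem_singleton_iff, Set.mem_iUnion, Set.mem_inter_iff,
      Finset.mem_univ, exists_true_left, exists_eq_left', Pi.sub_apply]
    rw [eq_neg_add_iff_add_eq, sub_eq_iff_eq_add, eq_comm]
  have hdisj : (↑(Finset.univ : Finset G) : Set G).PairwiseDisjoint
      fun r ↦ X ⁻¹' {r} ∩ Y ⁻¹' {-c + r} :=
    (Set.pairwiseDisjoint_fiber X _).mono fun _ ↦ Set.inter_subset_left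
  calc μ ((X - Y) ⁻¹' {c})
      = ∑ r, μ (X ⁻¹' {r}) * μ (Y ⁻¹' {-c + r}) := by
        rw [hfibers, measure_biUnion_finset hdisj fun r _ ↦
          (hX (measurableSet_singleton r)).inter (hY (measurableSet_singleton _))]
        exact Finset.sum_congr rfl fun r _ ↦
          hXY.measure_inter_preimage_eq_mul _ _ (measurableSet_singleton r)
            (measurableSet_singleton _)
    _ = (∑ r, μ (X ⁻¹' {r})) * (Fintype.card G : ENNReal)⁻¹ := by
        simp only [hY_unif, Finset.sum_mul]
    _ = (Fintype.card G : ENNReal)⁻¹ := by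
        rw [sum_measure_preimage_singleton _ fun r _ ↦ hX (measurableSet_singleton r)]
        simp

theorem ProbabilityTheory.IndepFun.measure_sub_preimage_finset (hX : Measurable X)
    (hY : Measurable Y) (hXY : IndepFun X Y μ)
    (hY_unif : ∀ r, μ (Y ⁻¹' {r}) = (Fintype.card G : ENNReal)⁻¹) (S : Finset G) :
    μ ((X - Y) ⁻¹' S) = S.card / Fintype.card G := by
  rw [← sum_measure_preimage_singleton S fun r _ ↦ (hX.sub hY) (measurableSet_singleton r)]
  simp [hXY.measure_sub_preimage_singleton hX hY hY_unif, div_eq_mul_inv]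

end UniformDifference

namespace ZMod

theorem two_pow_pred_ne_zero {L : ℕ} (hL : 1 ≤ L) : (2 : ZMod (2 ^ L)) ^ (L - 1) ≠ 0 := by
  have h : ((2 ^ (L - 1) : ℕ) : ZMod (2 ^ L)) ≠ 0 := by
    rw [Ne, natCast_eq_zero_iff, Nat.pow_dvd_pow_iff_le_right Nat.one_lt_two]
    omega
  exact_mod_cast h

theorem natCast_mul_two_pow_pred_eq_zero_of_even {L e : ℕ} (hL : 1 ≤ L) (he : Even e) :
    (e : ZMod (2 ^ L)) * 2 ^ (L - 1) = 0 := by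
  obtain ⟨m, rfl⟩ := he.two_dvd
  obtain ⟨l, rfl⟩ : ∃ l, L = l + 1 := ⟨L - 1, by omega⟩
  have h : (2 : ZMod (2 ^ (l + 1))) ^ (l + 1) = 0 := by
    exact_mod_cast natCast_self (2 ^ (l + 1))
  rw [Nat.add_sub_cancel]
  push_cast
  linear_combination (m : ZMod (2 ^ (l + 1))) * h

end ZMod

theorem sum_pow_mul_append_pair {R A : Type*} [CommSemiring R] {k : ℕ} (c : R) (x : A → R)
    (β : Fin k → A) (a a' : A) :
    ∑ i : Fin (k + 2), c ^ (i : ℕ) * x (Fin.append β ![a, a'] i) =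
      ∑ i : Fin k, c ^ (i : ℕ) * x (β i) + c ^ k * x a + c ^ (k + 1) * x a' := by
  simp [Fin.sum_univ_add, Fin.sum_univ_two, add_assoc]

theorem sum_pow_mul_append_double_eq_of_mul_sub_eq_zero {R A : Type*} [CommRing R] {k : ℕ}
    (c : R) (x : A → R) (β : Fin k → A) {a b : A} (hab : (1 + c) * (x a - x b) = 0) :
    ∑ i : Fin (k + 2), c ^ (i : ℕ) * x (Fin.append β ![a, a] i) =
      ∑ i : Fin (k + 2), c ^ (i : ℕ) * x (Fin.append β ![b, b] i) := by
  rw [sum_pow_mul_append_pair, sum_pow_mul_append_pair]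
  linear_combination c ^ k * hab

theorem ENNReal.two_div_two_pow {L : ℕ} (hL : 1 ≤ L) :
    (2 : ENNReal) / 2 ^ L = 1 / 2 ^ (L - 1) := by
  obtain ⟨l, rfl⟩ : ∃ l, L = l + 1 := ⟨L - 1, by omega⟩
  simpa [pow_succ'] using ENNReal.mul_div_mul_left 1 (2 ^ l) two_ne_zero ENNReal.ofNat_ne_top

/-- Randomized Integer-Division hashing modulo `2^L` with `B` odd is never pairwise
independent: for any prefix `β` and distinct symbols `a ≠ b`, the `n`-grams `βaa` and `βbb`
collide with probability at least `1/2^{L-1}` (pairwise independence would require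
collision probability exactly `1/2^L`). -/
theorem stmt_8
    {Ω : Type*} [MeasurableSpace Ω] (μ : Measure Ω) [IsProbabilityMeasure μ]
    {A : Type*} (k L : ℕ) (hL : 2 ≤ L) (B : ℕ) (hB : Odd B)
    (h₁ : Ω → A → ZMod (2 ^ L))
    (hmeas : ∀ (c : A) (r : ZMod (2 ^ L)), MeasurableSet {ω | h₁ ω c = r})
    (hunif : ∀ (c : A) (r : ZMod (2 ^ L)), μ {ω | h₁ ω c = r} = 1 / 2 ^ L)
    (hind : ProbabilityTheory.iIndepFun (m := fun _ : A => (⊤ : MeasurableSpace (ZMod (2 ^ L))))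
      (fun c ω => h₁ ω c) μ)
    (β : Fin k → A) (a b : A) (hab : a ≠ b) :
    1 / 2 ^ (L - 1) ≤
      μ {ω | (∑ i : Fin (k + 2), (B : ZMod (2 ^ L)) ^ (i : ℕ) * h₁ ω (Fin.append β ![a, a] i))
           = (∑ i : Fin (k + 2), (B : ZMod (2 ^ L)) ^ (i : ℕ) * h₁ ω (Fin.append β ![b, b] i))} := by
  -- the σ-algebra on hash values in which `hind` is stated
  let _ : MeasurableSpace (ZMod (2 ^ L)) := ⊤
  have hL₁ : 1 ≤ L := by omega
  have hcard : (Fintype.card (ZMod (2 ^ L)) : ENNReal) = 2 ^ L := by simp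
  have hunif_b (r : ZMod (2 ^ L)) :
      μ ((h₁ · b) ⁻¹' {r}) = (Fintype.card (ZMod (2 ^ L)) : ENNReal)⁻¹ := by
    rw [hcard, ← one_div]
    exact hunif b r
  let S : Finset (ZMod (2 ^ L)) := {0, 2 ^ (L - 1)}
  have hS : S.card = 2 := Finset.card_pair (ZMod.two_pow_pred_ne_zero hL₁).symm
  have hcollide (d : ZMod (2 ^ L)) (hd : d ∈ S) : (1 + (B : ZMod (2 ^ L))) * d = 0 := by
    rcases Finset.mem_insert.1 hd with rfl | hd
    · exact mul_zero _
    · rw [Finset.mem_singleton.1 hd]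
      exact_mod_cast ZMod.natCast_mul_two_pow_pred_eq_zero_of_even hL₁ (odd_one.add_odd hB)
  calc 1 / 2 ^ (L - 1) = (S.card : ENNReal) / Fintype.card (ZMod (2 ^ L)) := by
        rw [hS, hcard, Nat.cast_ofNat, ENNReal.two_div_two_pow hL₁]
    _ = μ ((fun ω ↦ h₁ ω a - h₁ ω b) ⁻¹' S) :=
        ((hind.indepFun hab).measure_sub_preimage_finset (measurable_to_countable' (hmeas a))
          (measurable_to_countable' (hmeas b)) hunif_b S).symm
    _ ≤ _ := measure_mono fun ω hω ↦
        sum_pow_mul_append_double_eq_of_mul_sub_eq_zero _ _ β (hcollide _ hω)
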